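/- Let ε ∈ [0,1/2) and let F_ε be the qubit dephasing channel F_ε(ρ) = (1−ε)ρ + ε σ_z ρ σ_z, where σ_z is the Pauli Z matrix. Then F_ε is invertible as a linear map on M₂(ℂ) and ν(F_ε⁻¹) = log₂(1/(1−2ε)). -/

import Mathlib

/-!
The inverse of `F_ε` is again a real combination `p • id + q • (σ_z · σ_z)`, namely with
`p = (1 - ε)/(1 - 2ε)` and `q = -ε/(1 - 2ε)`, since such combinations compose like elements of
the group algebra `ℝ[ℤ/2]`. Its two terms are CPTP, so `ν ≤ log₂ (|p| + |q|)`. Conversely, every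
CPTP map sends `|+⟩⟨+|` to a state `σ`, and `|tr σ| = 1`, `2 |σ₀₁| ≤ 1`; testing a decomposition
`∑ η_α O_α` against these two functionals gives `∑ |η_α| ≥ |p + q|` and `∑ |η_α| ≥ |p - q|`,
and the larger of the two is `|p| + |q|`.
-/

open scoped Kronecker ComplexOrder
open Matrix

noncomputable section

/-- `id_k ⊗ N` applied blockwise. -/
def idTensor {n m : Type*} (k : Type*)
    (N : Matrix n n ℂ → Matrix m m ℂ)
    (M : Matrix (k × n) (k × n) ℂ) : Matrix (k × m) (k × m) ℂ :=
  Matrix.of fun p q => N (Matrix.of fun a b => M (p.1, a) (q.1, b)) p.2 q.2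

/-- Trace-preserving. -/
def IsTP {n m : Type*} [Fintype n] [Fintype m]
    (N : Matrix n n ℂ → Matrix m m ℂ) : Prop :=
  ∀ X, (N X).trace = X.trace

/-- Hermitian-preserving. -/
def IsHP {n m : Type*} (N : Matrix n n ℂ → Matrix m m ℂ) : Prop :=
  ∀ X, X.IsHermitian → (N X).IsHermitian

/-- Completely positive: for every `k`, `id_k ⊗ N` preserves positive semidefiniteness. -/
def IsCP {n m : Type*} [Fintype n] [Fintype m]
    (N : Matrix n n ℂ → Matrix m m ℂ) : Prop :=
  ∀ (k : ℕ) (M : Matrix (Fin k × n) (Fin k × n) ℂ),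
    M.PosSemidef → (idTensor (Fin k) N M).PosSemidef

/-- Completely positive and trace-preserving (quantum channel). -/
def IsCPTP {n m : Type*} [Fintype n] [Fintype m]
    (N : Matrix n n ℂ → Matrix m m ℂ) : Prop :=
  IsLinearMap ℂ N ∧ IsCP N ∧ IsTP N

/-- Completely positive and trace non-increasing. -/
def IsCPTN {n m : Type*} [Fintype n] [Fintype m]
    (N : Matrix n n ℂ → Matrix m m ℂ) : Prop :=
  IsLinearMap ℂ N ∧ IsCP N ∧ ∀ X : Matrix n n ℂ, X.PosSemidef → (N X).trace ≤ X.trace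

/-- Costs of finite quasiprobability decompositions of `N` into CPTP maps. -/
def decompCosts {n m : Type*} [Fintype n] [Fintype m]
    (N : Matrix n n ℂ → Matrix m m ℂ) : Set ℝ :=
  { c | ∃ (s : ℕ) (η : Fin s → ℝ) (O : Fin s → (Matrix n n ℂ → Matrix m m ℂ)),
      (∀ i, IsCPTP (O i)) ∧ (∀ X, N X = ∑ i, (η i : ℂ) • O i X) ∧ c = ∑ i, |η i| }

/-- The physical implementability `ν(N)`. -/
noncomputable def nu {n m : Type*} [Fintype n] [Fintype m]
    (N : Matrix n n ℂ → Matrix m m ℂ) : ℝ :=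
  Real.logb 2 (sInf (decompCosts N))

/-- The Choi matrix of a linear map. -/
def choiMatrix {n m : Type*} [DecidableEq n]
    (N : Matrix n n ℂ → Matrix m m ℂ) : Matrix (n × m) (n × m) ℂ :=
  Matrix.of fun p q => N (Matrix.single p.1 q.1 1) p.2 q.2

/-- Partial trace over the second tensor factor. -/
def ptraceB {n m : Type*} [Fintype m] (J : Matrix (n × m) (n × m) ℂ) :
    Matrix n n ℂ :=
  Matrix.of fun i j => ∑ a, J (i, a) (j, a)

/-- The trace norm of a matrix. -/
noncomputable def traceNorm {k : Type*} [Fintype k] [DecidableEq k]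
    (X : Matrix k k ℂ) : ℝ :=
  (((Matrix.posSemidef_conjTranspose_mul_self X).1.eigenvectorUnitary.1 *
      diagonal ((fun x : ℝ => (x : ℂ)) ∘ (√·) ∘ (Matrix.posSemidef_conjTranspose_mul_self X).1.eigenvalues) *
      (star (Matrix.posSemidef_conjTranspose_mul_self X).1.eigenvectorUnitary :
        Matrix k k ℂ)).trace).re

/-- Tensor product of two maps. -/
def tensorMap {n₁ n₂ m₂ : Type*} [Fintype n₁] [DecidableEq n₁]
    (M : Matrix n₁ n₁ ℂ → Matrix n₁ n₁ ℂ) (N : Matrix n₂ n₂ ℂ → Matrix m₂ m₂ ℂ)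
    (X : Matrix (n₁ × n₂) (n₁ × n₂) ℂ) : Matrix (n₁ × m₂) (n₁ × m₂) ℂ :=
  ∑ i : n₁, ∑ j : n₁,
    (M (Matrix.single i j 1)) ⊗ₖ (N (Matrix.of fun a b => X (i, a) (j, b)))

/-- The qubit dephasing channel `F_ε(ρ) = (1−ε)ρ + ε σ_z ρ σ_z`. -/
def dephasing (ε : ℝ) (X : Matrix (Fin 2) (Fin 2) ℂ) : Matrix (Fin 2) (Fin 2) ℂ :=
  ((1 - ε : ℝ) : ℂ) • X + (ε : ℂ) • (!![1, 0; 0, -1] * X * !![1, 0; 0, -1])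

theorem Matrix.PosSemidef.two_mul_norm_apply_zero_one_le_trace
    {M : Matrix (Fin 2) (Fin 2) ℂ} (hM : M.PosSemidef) : 2 * ‖M 0 1‖ ≤ M.trace.re := by
  have hdet := hM.det_nonneg
  have h10 : M 1 0 = starRingEnd ℂ (M 0 1) := by
    simpa using (congrFun (congrFun hM.1.eq 1) 0).symm
  obtain ⟨h00, h00im⟩ := Complex.nonneg_iff.mp (hM.diag_nonneg (i := 0))
  obtain ⟨h11, h11im⟩ := Complex.nonneg_iff.mp (hM.diag_nonneg (i := 1))
  rw [det_fin_two, h10, Complex.mul_conj', Complex.nonneg_iff] at hdet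
  have hsq : ‖M 0 1‖ ^ 2 ≤ (M 0 0).re * (M 1 1).re := by
    have := hdet.1
    simp only [Complex.sub_re, Complex.mul_re, ← h00im, ← h11im] at this
    norm_cast at this
    nlinarith
  rw [trace_fin_two, Complex.add_re]
  nlinarith [sq_nonneg ((M 0 0).re - (M 1 1).re), norm_nonneg (M 0 1)]

section Channels

variable {n m : Type*} [Fintype n] [Fintype m]

theorem isCP_conj (A : Matrix m n ℂ) : IsCP (fun X : Matrix n n ℂ => A * X * Aᴴ) := by
  intro k M hM
  have hblock : idTensor (Fin k) (fun X : Matrix n n ℂ => A * X * Aᴴ) M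
      = ((1 : Matrix (Fin k) (Fin k) ℂ) ⊗ₖ A) * M * ((1 : Matrix (Fin k) (Fin k) ℂ) ⊗ₖ A)ᴴ := by
    ext ⟨i, a⟩ ⟨j, b⟩
    simp [idTensor, mul_apply, kroneckerMap_apply, conjTranspose_apply, one_apply,
      Fintype.sum_prod_type, Finset.sum_mul, apply_ite, Finset.sum_ite_irrel]
  rw [hblock]
  exact hM.mul_mul_conjTranspose_same _

theorem isCPTP_conj_of_conjTranspose_mul_self [DecidableEq n] {A : Matrix m n ℂ}
    (hA : Aᴴ * A = 1) :
    IsCPTP (fun X : Matrix n n ℂ => A * X * Aᴴ) := by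
  refine ⟨⟨fun X Y => by simp only [Matrix.mul_add, Matrix.add_mul], fun c X => by simp⟩,
    isCP_conj A, fun X => ?_⟩
  rw [trace_mul_cycle, hA, Matrix.one_mul]

theorem isCPTP_id : IsCPTP (fun X : Matrix n n ℂ => X) := by
  classical
  simpa using isCPTP_conj_of_conjTranspose_mul_self (A := (1 : Matrix n n ℂ)) (by simp)

theorem IsCP.posSemidef_apply {N : Matrix n n ℂ → Matrix m m ℂ} (hN : IsCP N)
    {X : Matrix n n ℂ} (hX : X.PosSemidef) : (N X).PosSemidef := by
  have h := hN 1 (X.submatrix Prod.snd Prod.snd) (hX.submatrix _)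
  have hsub : (idTensor (Fin 1) N (X.submatrix Prod.snd Prod.snd)).submatrix
      (fun i => (0, i)) (fun i => (0, i)) = N X := by
    ext i j
    rfl
  exact hsub ▸ h.submatrix _

theorem norm_le_of_mem_decompCosts {N : Matrix n n ℂ → Matrix m m ℂ} {c : ℝ}
    (hc : c ∈ decompCosts N) (f : Matrix m m ℂ →ₗ[ℂ] ℂ) (X : Matrix n n ℂ)
    (hf : ∀ O, IsCPTP O → ‖f (O X)‖ ≤ 1) : ‖f (N X)‖ ≤ c := by
  obtain ⟨s, η, O, hO, hN, rfl⟩ := hc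
  calc ‖f (N X)‖ = ‖∑ i, (η i : ℂ) * f (O i X)‖ := by simp [hN, map_sum]
    _ ≤ ∑ i, |η i| * ‖f (O i X)‖ := (norm_sum_le _ _).trans_eq (by simp)
    _ ≤ ∑ i, |η i| := Finset.sum_le_sum fun i _ =>
          mul_le_of_le_one_right (abs_nonneg _) (hf _ (hO i))

end Channels

def pauliZ : Matrix (Fin 2) (Fin 2) ℂ := !![1, 0; 0, -1]

theorem pauliZ_conjTranspose : pauliZᴴ = pauliZ := by
  ext i j
  fin_cases i <;> fin_cases j <;> simp [pauliZ]

theorem pauliZ_mul_self : pauliZ * pauliZ = 1 := by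
  simp [pauliZ, one_fin_two]

theorem isCPTP_pauliZ_conj : IsCPTP (fun X => pauliZ * X * pauliZ) := by
  have h := isCPTP_conj_of_conjTranspose_mul_self (A := pauliZ)
    (by rw [pauliZ_conjTranspose, pauliZ_mul_self])
  rwa [pauliZ_conjTranspose] at h

def pauliZMix (p q : ℝ) (X : Matrix (Fin 2) (Fin 2) ℂ) : Matrix (Fin 2) (Fin 2) ℂ :=
  (p : ℂ) • X + (q : ℂ) • (pauliZ * X * pauliZ)

theorem dephasing_eq_pauliZMix (ε : ℝ) : dephasing ε = pauliZMix (1 - ε) ε := rfl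

theorem isLinearMap_pauliZMix (p q : ℝ) : IsLinearMap ℂ (pauliZMix p q) where
  map_add X Y := by
    simp only [pauliZMix, Matrix.mul_add, Matrix.add_mul]
    module
  map_smul c X := by
    simp only [pauliZMix, Matrix.mul_smul, Matrix.smul_mul]
    module

theorem pauliZMix_pauliZMix (p q r s : ℝ) (X : Matrix (Fin 2) (Fin 2) ℂ) :
    pauliZMix p q (pauliZMix r s X) = pauliZMix (p * r + q * s) (p * s + q * r) X := by
  have hZZ : pauliZ * (pauliZ * X * pauliZ) * pauliZ = X := by
    simp only [← Matrix.mul_assoc, pauliZ_mul_self, Matrix.one_mul]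
    rw [Matrix.mul_assoc, pauliZ_mul_self, Matrix.mul_one]
  simp only [pauliZMix, Matrix.mul_add, Matrix.add_mul, Matrix.mul_smul, Matrix.smul_mul, hZZ]
  push_cast
  module

theorem pauliZMix_one_zero (X : Matrix (Fin 2) (Fin 2) ℂ) : pauliZMix 1 0 X = X := by
  simp [pauliZMix]

/-- The state `|+⟩⟨+|`. -/
def plusState : Matrix (Fin 2) (Fin 2) ℂ := !![1 / 2, 1 / 2; 1 / 2, 1 / 2]

theorem posSemidef_plusState : plusState.PosSemidef := by
  have h : plusState = ((1 / 2 : ℝ) : ℂ) • vecMulVec ![1, 1] (star ![1, 1]) := by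
    ext i j
    fin_cases i <;> fin_cases j <;> simp [plusState, vecMulVec]
  rw [h]
  exact (posSemidef_vecMulVec_self_star _).smul (by positivity)

theorem trace_plusState : plusState.trace = 1 := by
  norm_num [plusState, trace_fin_two]

theorem trace_pauliZMix_plusState (p q : ℝ) : (pauliZMix p q plusState).trace = p + q := by
  simp [pauliZMix, trace_mul_cycle pauliZ, pauliZ_mul_self, trace_plusState]

theorem pauliZMix_plusState_zero_one (p q : ℝ) :
    pauliZMix p q plusState 0 1 = (p - q) / 2 := by
  simp [pauliZMix, pauliZ, plusState]
  ring

theorem pauliZMix_mem_decompCosts (p q : ℝ) : |p| + |q| ∈ decompCosts (pauliZMix p q) := by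
  refine ⟨2, ![p, q], ![fun X => X, fun X => pauliZ * X * pauliZ], ?_, fun X => ?_, ?_⟩
  · intro i
    fin_cases i
    exacts [isCPTP_id, isCPTP_pauliZ_conj]
  · simp [pauliZMix]
  · simp

theorem abs_add_le_of_mem_decompCosts_pauliZMix {p q c : ℝ}
    (hc : c ∈ decompCosts (pauliZMix p q)) : |p + q| ≤ c := by
  have h := norm_le_of_mem_decompCosts hc (traceLinearMap (Fin 2) ℂ ℂ) plusState fun O hO => by
    simp [hO.2.2 plusState, trace_plusState]
  rwa [traceLinearMap_apply, trace_pauliZMix_plusState, ← Complex.ofReal_add,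
    Complex.norm_real, Real.norm_eq_abs] at h

theorem abs_sub_le_of_mem_decompCosts_pauliZMix {p q c : ℝ}
    (hc : c ∈ decompCosts (pauliZMix p q)) : |p - q| ≤ c := by
  have h := norm_le_of_mem_decompCosts hc ((2 : ℂ) • entryLinearMap ℂ ℂ 0 1) plusState
    fun O hO => by
      have hpsd := hO.2.1.posSemidef_apply posSemidef_plusState
      simpa [hO.2.2 plusState, trace_plusState] using hpsd.two_mul_norm_apply_zero_one_le_trace
  rwa [LinearMap.smul_apply, entryLinearMap_apply, pauliZMix_plusState_zero_one,
    smul_eq_mul, mul_div_cancel₀ _ two_ne_zero, ← Complex.ofReal_sub, Complex.norm_real,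
    Real.norm_eq_abs] at h

theorem isLeast_decompCosts_pauliZMix (p q : ℝ) :
    IsLeast (decompCosts (pauliZMix p q)) (|p| + |q|) := by
  refine ⟨pauliZMix_mem_decompCosts p q, fun c hc => ?_⟩
  obtain ⟨h₁, h₂⟩ := abs_le.mp (abs_add_le_of_mem_decompCosts_pauliZMix hc)
  obtain ⟨h₃, h₄⟩ := abs_le.mp (abs_sub_le_of_mem_decompCosts_pauliZMix hc)
  cases abs_cases p <;> cases abs_cases q <;> linarith

theorem nu_pauliZMix (p q : ℝ) : nu (pauliZMix p q) = Real.logb 2 (|p| + |q|) := by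
  rw [nu, (isLeast_decompCosts_pauliZMix p q).csInf_eq]

/-- the qubit dephasing channel `F_ε` (with `0 ≤ ε < 1/2`) is invertible
and `ν(F_ε⁻¹) = log₂(1/(1−2ε))`. -/
theorem nu_dephasing_inverse (ε : ℝ) (hε0 : 0 ≤ ε) (hε1 : ε < 1 / 2) :
    ∃ Finv : Matrix (Fin 2) (Fin 2) ℂ → Matrix (Fin 2) (Fin 2) ℂ,
      IsLinearMap ℂ Finv ∧ (∀ X, Finv (dephasing ε X) = X) ∧
      nu Finv = Real.logb 2 (1 / (1 - 2 * ε)) := by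
  have hδ : 0 < 1 - 2 * ε := by linarith
  have hδ' : 1 - 2 * ε ≠ 0 := hδ.ne'
  refine ⟨pauliZMix ((1 - ε) / (1 - 2 * ε)) (-ε / (1 - 2 * ε)), isLinearMap_pauliZMix _ _,
    fun X => ?_, ?_⟩
  · rw [dephasing_eq_pauliZMix, pauliZMix_pauliZMix]
    convert pauliZMix_one_zero X using 2 <;>
      rw [div_mul_eq_mul_div, div_mul_eq_mul_div, ← add_div]
    · rw [div_eq_one_iff_eq hδ']
      ring
    · rw [div_eq_zero_iff]
      exact Or.inl (by ring)
  · have hq : -ε / (1 - 2 * ε) ≤ 0 := div_nonpos_of_nonpos_of_nonneg (by linarith) hδ.le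
    rw [nu_pauliZMix, abs_of_nonneg (by bound), abs_of_nonpos hq]
    congr 1
    field_simp
    ring

end
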